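/- For every θ ∈ (π/2, 3π/2) with θ ≠ π and every nonzero complex number w₁ with w₁² = d₁(θ), the matrices C₀(θ) and C₁(θ) violate Jørgensen's inequality: |trace(C₁(θ))² − 4| + |trace(C₁(θ)·C₀(θ)·C₁(θ)⁻¹·C₀(θ)⁻¹) − 2| < 1, where |·| denotes the complex absolute value. -/

import Mathlib

noncomputable section

open Matrix Complex

abbrev M2 := Matrix (Fin 2) (Fin 2) ℂ
abbrev SL2C := Matrix.SpecialLinearGroup (Fin 2) ℂ

instance : TopologicalSpace SL2C := instTopologicalSpaceSubtype

/-- The matrix `C₀(θ)`. -/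
def C0 (θ : ℝ) : M2 := (1 / 4 : ℂ) •
  !![((-Real.cos θ + 2 * Real.cos (2 * θ) + Real.cos (3 * θ) + 6 : ℝ) : ℂ) /
        ((Real.sin θ : ℂ)) ^ 2,
     4 * Complex.I * (Real.sin θ : ℂ) * (Real.cos θ : ℂ) / ((Real.cos θ : ℂ) - 1);
     2 * Complex.I * (Real.sin θ : ℂ) * (Real.cos θ : ℂ) / ((Real.sin (θ / 2) : ℂ)) ^ 2,
     4 * ((Real.cos θ : ℂ) + 1)]

/-- The unnormalized action `Â₁(θ)`. -/
def A1 (θ : ℝ) : M2 := (1 / 8 : ℂ) •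
  !![((-Real.cos θ + 2 * Real.cos (2 * θ) + Real.cos (3 * θ) + 6 : ℝ) : ℂ),
     -Complex.I * ((Real.sin θ + 2 * Real.sin (2 * θ) + Real.sin (3 * θ) : ℝ) : ℂ);
     Complex.I * ((Real.sin θ + 2 * Real.sin (2 * θ) + Real.sin (3 * θ) : ℝ) : ℂ),
     ((-7 * Real.cos θ - 2 * Real.cos (2 * θ) - Real.cos (3 * θ) + 2 : ℝ) : ℂ)]

/-- `d₁(θ) = det Â₁(θ)`. -/
def d1 (θ : ℝ) : ℂ :=
  ((5 - 28 * Real.cos θ - 4 * Real.cos (2 * θ) - 4 * Real.cos (3 * θ) -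
      Real.cos (4 * θ) : ℝ) : ℂ) / 32

/-- The normalized action `C₁(θ) = w₁⁻¹ · Â₁(θ)`. -/
def C1 (θ : ℝ) (w₁ : ℂ) : M2 := w₁⁻¹ • A1 θ

/-- The unnormalized action `Â₂(θ)`. -/
def A2 (θ : ℝ) : M2 := (1 / 8 : ℂ) •
  !![((7 * Real.cos θ - 2 * Real.cos (2 * θ) + Real.cos (3 * θ) + 2 : ℝ) : ℂ),
     -Complex.I * ((Real.sin θ - 2 * Real.sin (2 * θ) + Real.sin (3 * θ) : ℝ) : ℂ);
     -8 * Complex.I * ((Real.sin (θ / 2) ^ 2 * Real.sin θ * Real.cos θ : ℝ) : ℂ),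
     ((Real.cos θ + 2 * Real.cos (2 * θ) - Real.cos (3 * θ) + 6 : ℝ) : ℂ)]

/-- `d₂(θ) = det Â₂(θ)`. -/
def d2 (θ : ℝ) : ℂ :=
  ((5 + 28 * Real.cos θ - 4 * Real.cos (2 * θ) + 4 * Real.cos (3 * θ) -
      Real.cos (4 * θ) : ℝ) : ℂ) / 32

/-- The normalized action `C₂(θ) = w₂⁻¹ · Â₂(θ)`. -/
def C2 (θ : ℝ) (w₂ : ℂ) : M2 := w₂⁻¹ • A2 θ

/-- The unnormalized action `Â₃(θ)`, with determinant `cos θ`. -/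
def A3 (θ : ℝ) : M2 :=
  !![(((Real.cos (2 * θ) + 3) / 4 : ℝ) : ℂ),
     Complex.I * ((Real.sin (θ / 2) ^ 2 * Real.sin θ : ℝ) : ℂ);
     -Complex.I * ((Real.sin (θ / 2) ^ 2 * Real.sin θ : ℝ) : ℂ),
     (((Real.sin θ ^ 2 + 2 * Real.cos θ) / 2 : ℝ) : ℂ)]

/-- The normalized action `C₃(θ) = w₃⁻¹ · Â₃(θ)`. -/
def C3 (θ : ℝ) (w₃ : ℂ) : M2 := w₃⁻¹ • A3 θ

/-- The normalized action `C₄(θ)`. -/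
def C4 (θ : ℝ) (w₄ : ℂ) : M2 := (w₄ / 2) •
  !![-(((Real.cos (2 * θ) + 3) : ℝ) : ℂ) / (2 * (Real.cos θ : ℂ)),
     Complex.I * ((Real.sin θ + Real.tan θ : ℝ) : ℂ);
     -Complex.I * ((Real.sin θ + Real.tan θ : ℝ) : ℂ),
     (((4 * Real.cos θ + Real.cos (2 * θ) - 1) : ℝ) : ℂ) / (2 * (Real.cos θ : ℂ))]

/-!
Write `c = cos θ` and `v = i sin θ cos θ`, so that `v² = (c² - 1) c²`; then `Â₁(θ)` and `C₀(θ)`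
are rational in `c` and `v`, with `tr Â₁ = 1 - c`, `tr C₀ = 2 / (1 - c²)`,
`tr (Â₁ C₀) = (c³ + c² - c + 1) / (1 - c²)` and `w₁² = det Â₁ = P / 4`, where
`P = (1 + c²)(1 - 2c - c²)`. Fricke's identity
`tr [A, B] = tr² A + tr² B + tr² (AB) - tr A tr B tr (AB) - 2` in `SL₂` turns the two Jørgensen
terms into the nonnegative rational functions `4c²(1 + c)² / P` and `4c⁴(1 + c) / ((1 - c) P)`,
whose sum `4c²(1 + c) / ((1 - c) P)` is below `1` for `-1 < c < 0`.
-/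

theorem Matrix.trace_mul_mul_adjugate_mul_adjugate_fin_two {R : Type*} [CommRing R]
    (A B : Matrix (Fin 2) (Fin 2) R) :
    (A * B * A.adjugate * B.adjugate).trace =
      B.det * A.trace ^ 2 + A.det * B.trace ^ 2 + (A * B).trace ^ 2
        - A.trace * B.trace * (A * B).trace - 2 * A.det * B.det := by
  simp only [Matrix.adjugate_fin_two, Matrix.det_fin_two, Matrix.trace_fin_two, Matrix.mul_apply,
    Fin.sum_univ_two, Matrix.of_apply, Matrix.cons_val', Matrix.cons_val_zero,
    Matrix.cons_val_one, Matrix.empty_val', Matrix.cons_val_fin_one]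
  ring

theorem Matrix.trace_mul_mul_inv_mul_inv_fin_two {R : Type*} [CommRing R]
    (A B : Matrix (Fin 2) (Fin 2) R) (hA : A.det = 1) (hB : B.det = 1) :
    (A * B * A⁻¹ * B⁻¹).trace =
      A.trace ^ 2 + B.trace ^ 2 + (A * B).trace ^ 2 - A.trace * B.trace * (A * B).trace - 2 := by
  rw [Matrix.inv_def, Matrix.inv_def, hA, hB, Ring.inverse_one, one_smul, one_smul,
    Matrix.trace_mul_mul_adjugate_mul_adjugate_fin_two, hA, hB]
  ring

theorem Matrix.det_inv_smul_of_sq_eq_det {K : Type*} [Field K] (A : Matrix (Fin 2) (Fin 2) K)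
    {w : K} (hw0 : w ≠ 0) (hw : w ^ 2 = A.det) : (w⁻¹ • A).det = 1 := by
  rw [Matrix.det_smul, Fintype.card_fin, ← hw, inv_pow, inv_mul_cancel₀ (pow_ne_zero 2 hw0)]

def A1Alg (c v : ℂ) : M2 :=
  (1 / 2 : ℂ) • !![c ^ 3 + c ^ 2 - c + 1, -(v * (1 + c)); v * (1 + c), 1 - c - c ^ 2 - c ^ 3]

def C0Alg (c v : ℂ) : M2 :=
  (1 - c ^ 2)⁻¹ • !![c ^ 3 + c ^ 2 - c + 1, -(v * (1 + c)); v * (1 + c), (1 + c) * (1 - c ^ 2)]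

section Algebraic

variable {c v : ℂ}

theorem trace_A1Alg : (A1Alg c v).trace = 1 - c := by
  simp only [A1Alg, Matrix.trace_smul, Matrix.trace_fin_two_of, smul_eq_mul]
  ring

theorem trace_C0Alg : (C0Alg c v).trace = 2 * (1 - c ^ 2)⁻¹ := by
  simp only [C0Alg, Matrix.trace_smul, Matrix.trace_fin_two_of, smul_eq_mul]
  ring

variable (hv : v ^ 2 = (c ^ 2 - 1) * c ^ 2)
include hv

theorem det_A1Alg : (A1Alg c v).det = (1 + c ^ 2) * (1 - 2 * c - c ^ 2) / 4 := by
  rw [A1Alg, Matrix.det_smul, Matrix.det_fin_two_of, Fintype.card_fin]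
  linear_combination (1 + c) ^ 2 / 4 * hv

theorem det_C0Alg (hc : 1 - c ^ 2 ≠ 0) : (C0Alg c v).det = 1 := by
  rw [C0Alg, Matrix.det_smul, Matrix.det_fin_two_of, Fintype.card_fin]
  field_simp
  linear_combination (1 + c) ^ 2 * hv

theorem trace_A1Alg_mul_C0Alg :
    (A1Alg c v * C0Alg c v).trace = (c ^ 3 + c ^ 2 - c + 1) * (1 - c ^ 2)⁻¹ := by
  simp only [A1Alg, C0Alg, Matrix.smul_mul, Matrix.mul_smul, Matrix.trace_smul, smul_eq_mul,
    Matrix.mul_fin_two, Matrix.trace_fin_two_of]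
  linear_combination (-(1 + c) ^ 2 * (1 - c ^ 2)⁻¹) * hv

variable {w : ℂ} (hw0 : w ≠ 0) (hw : w ^ 2 = (A1Alg c v).det)
include hw0 hw

theorem trace_inv_smul_A1Alg_sq_sub_four :
    (w⁻¹ • A1Alg c v).trace ^ 2 - 4 =
      4 * c ^ 2 * (1 + c) ^ 2 / ((1 + c ^ 2) * (1 - 2 * c - c ^ 2)) := by
  rw [det_A1Alg hv] at hw
  rw [Matrix.trace_smul, trace_A1Alg, smul_eq_mul,
    show (1 + c ^ 2) * (1 - 2 * c - c ^ 2) = 4 * w ^ 2 by rw [hw]; ring]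
  field_simp
  linear_combination (-4) * hw

theorem trace_commutator_inv_smul_A1Alg_C0Alg_sub_two (hc : 1 - c ^ 2 ≠ 0) :
    ((w⁻¹ • A1Alg c v) * C0Alg c v * (w⁻¹ • A1Alg c v)⁻¹ * (C0Alg c v)⁻¹).trace - 2 =
      -(4 * c ^ 4 * (1 + c) / ((1 - c) * ((1 + c ^ 2) * (1 - 2 * c - c ^ 2)))) := by
  rw [Matrix.trace_mul_mul_inv_mul_inv_fin_two _ _
    (Matrix.det_inv_smul_of_sq_eq_det _ hw0 hw) (det_C0Alg hv hc)]
  simp only [Matrix.smul_mul, Matrix.trace_smul, smul_eq_mul, trace_A1Alg, trace_C0Alg,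
    trace_A1Alg_mul_C0Alg hv]
  rw [det_A1Alg hv] at hw
  rw [show (1 + c ^ 2) * (1 - 2 * c - c ^ 2) = 4 * w ^ 2 by rw [hw]; ring]
  have h1c : 1 - c ≠ 0 := fun h => hc (by linear_combination (1 + c) * h)
  field_simp
  linear_combination (4 * c ^ 2 * (2 - 2 * c - c ^ 2 + c ^ 3)) * hw

end Algebraic

theorem jorgensen_sum_lt_one {c : ℝ} (hc : c ∈ Set.Ioo (-1) 0) :
    |4 * c ^ 2 * (1 + c) ^ 2 / ((1 + c ^ 2) * (1 - 2 * c - c ^ 2))| +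
      |-(4 * c ^ 4 * (1 + c) / ((1 - c) * ((1 + c ^ 2) * (1 - 2 * c - c ^ 2))))| < 1 := by
  obtain ⟨hc₁, hc₀⟩ := hc
  have hQ : 0 < 1 - 2 * c - c ^ 2 := by nlinarith
  have h1c : 0 < 1 - c := by linarith
  have h1c' : 0 < 1 + c := by linarith
  rw [abs_neg, abs_of_nonneg (by positivity), abs_of_nonneg (by positivity)]
  have hsum : 4 * c ^ 2 * (1 + c) ^ 2 / ((1 + c ^ 2) * (1 - 2 * c - c ^ 2)) +
      4 * c ^ 4 * (1 + c) / ((1 - c) * ((1 + c ^ 2) * (1 - 2 * c - c ^ 2))) =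
      4 * c ^ 2 * (1 + c) / ((1 - c) * ((1 + c ^ 2) * (1 - 2 * c - c ^ 2))) := by
    field_simp
    ring
  rw [hsum, div_lt_one (by positivity)]
  nlinarith [mul_pos (neg_pos.2 hc₀) (by linarith : 0 < 3 + 2 * c), pow_pos (neg_pos.2 hc₀) 3,
    mul_nonneg (pow_nonneg (neg_nonneg.2 hc₀.le) 4) h1c'.le]

section Trigonometric

variable {θ : ℝ}

theorem sin_ne_zero_of_mem_Ioo (hθ : θ ∈ Set.Ioo (Real.pi / 2) (3 * Real.pi / 2))
    (hπ : θ ≠ Real.pi) : Real.sin θ ≠ 0 := by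
  intro hs
  have h : Real.sin (θ - Real.pi) = 0 := by rw [Real.sin_sub_pi, hs, neg_zero]
  rw [Real.sin_eq_zero_iff_of_lt_of_lt (by linarith [hθ.1, Real.pi_pos])
    (by linarith [hθ.2, Real.pi_pos]), sub_eq_zero] at h
  exact hπ h

theorem cos_mem_Ioo_of_sin_ne_zero (hθ : θ ∈ Set.Ioo (Real.pi / 2) (3 * Real.pi / 2))
    (hs : Real.sin θ ≠ 0) : Real.cos θ ∈ Set.Ioo (-1) 0 := by
  have hc₀ : Real.cos θ < 0 := Real.cos_neg_of_pi_div_two_lt_of_lt hθ.1 (by linarith [hθ.2])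
  have hs2 : 0 < Real.sin θ ^ 2 := by positivity
  exact ⟨by nlinarith [Real.sin_sq_add_cos_sq θ], hc₀⟩

variable (θ)

theorem sq_I_mul_sin_mul_cos :
    (I * Real.sin θ * Real.cos θ) ^ 2 = ((Real.cos θ : ℂ) ^ 2 - 1) * (Real.cos θ : ℂ) ^ 2 := by
  have h := congrArg ((↑) : ℝ → ℂ) (Real.sin_sq_add_cos_sq θ)
  push_cast at h ⊢
  linear_combination (-(Complex.cos θ) ^ 2) * h + (Complex.sin θ * Complex.cos θ) ^ 2 * I_sq

theorem d1_eq : d1 θ =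
    (((1 + Real.cos θ ^ 2) * (1 - 2 * Real.cos θ - Real.cos θ ^ 2) / 4 : ℝ) : ℂ) := by
  have hc4 : Real.cos (4 * θ) = 2 * Real.cos (2 * θ) ^ 2 - 1 := by
    rw [show 4 * θ = 2 * (2 * θ) by ring, Real.cos_two_mul]
  rw [d1, hc4, Real.cos_two_mul, Real.cos_three_mul]
  push_cast
  ring

theorem A1_eq_A1Alg : A1 θ = A1Alg (Real.cos θ) (I * Real.sin θ * Real.cos θ) := by
  rw [A1, A1Alg, Real.cos_two_mul, Real.cos_three_mul, Real.sin_two_mul, Real.sin_three_mul]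
  have hS := Complex.sin_sq_add_cos_sq θ
  ext i j
  fin_cases i <;> fin_cases j <;>
    simp only [Fin.zero_eta, Fin.mk_one, Fin.isValue, Matrix.smul_apply, of_apply, cons_val',
      cons_val_zero, cons_val_one, cons_val_fin_one, smul_eq_mul] <;> push_cast
  · ring
  · linear_combination (1 / 2 * I * Complex.sin θ) * hS
  · linear_combination (-(1 / 2) * I * Complex.sin θ) * hS
  · ring

variable {θ}

theorem C0_eq_C0Alg (hs : Real.sin θ ≠ 0) :
    C0 θ = C0Alg (Real.cos θ) (I * Real.sin θ * Real.cos θ) := by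
  have hsin : Complex.sin θ ^ 2 = 1 - Complex.cos θ ^ 2 := Complex.sin_sq _
  have hhalf : Complex.sin (θ / 2) ^ 2 = (1 - Complex.cos θ) / 2 := by
    have h := congrArg ((↑) : ℝ → ℂ) (Real.sin_sq_eq_half_sub (θ / 2))
    push_cast at h
    rw [h, mul_div_cancel₀ _ two_ne_zero]
    ring
  have hc2 : 1 - Complex.cos θ ^ 2 ≠ 0 := by
    rw [← hsin]
    exact pow_ne_zero 2 (by exact_mod_cast hs)
  have hc1 : 1 - Complex.cos θ ≠ 0 := fun h => hc2 (by linear_combination (1 + Complex.cos θ) * h)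
  rw [C0, C0Alg, Real.cos_two_mul, Real.cos_three_mul]
  ext i j
  fin_cases i <;> fin_cases j <;>
    simp only [Fin.zero_eta, Fin.mk_one, Fin.isValue, Matrix.smul_apply, of_apply, cons_val',
      cons_val_zero, cons_val_one, cons_val_fin_one, smul_eq_mul] <;> push_cast
  · rw [hsin]; field_simp; ring
  · rw [← neg_sub (1 : ℂ)]; field_simp; ring
  · rw [hhalf]; field_simp; ring
  · field_simp; ring

end Trigonometric

theorem stmt13 (θ : ℝ) (hθ : θ ∈ Set.Ioo (Real.pi / 2) (3 * Real.pi / 2)) (hπ : θ ≠ Real.pi)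
    (w₁ : ℂ) (hw₁ : w₁ ≠ 0) (h1 : w₁ ^ 2 = d1 θ) :
    ‖(C1 θ w₁).trace ^ 2 - 4‖ +
      ‖(C1 θ w₁ * C0 θ * (C1 θ w₁)⁻¹ * (C0 θ)⁻¹).trace - 2‖ < 1 := by
  have hs := sin_ne_zero_of_mem_Ioo hθ hπ
  have hv := sq_I_mul_sin_mul_cos θ
  have hc2 : 1 - (Real.cos θ : ℂ) ^ 2 ≠ 0 := by
    rw [← Complex.ofReal_pow, ← Complex.ofReal_one, ← Complex.ofReal_sub, ← Real.sin_sq]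
    exact_mod_cast pow_ne_zero 2 hs
  have hw : w₁ ^ 2 = (A1Alg (Real.cos θ) (I * Real.sin θ * Real.cos θ)).det := by
    rw [h1, d1_eq, det_A1Alg hv]
    push_cast
    ring
  rw [C1, A1_eq_A1Alg, C0_eq_C0Alg hs, trace_inv_smul_A1Alg_sq_sub_four hv hw₁ hw,
    trace_commutator_inv_smul_A1Alg_C0Alg_sub_two hv hw₁ hw hc2]
  exact_mod_cast jorgensen_sum_lt_one (cos_mem_Ioo_of_sin_ne_zero hθ hs)
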